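/- The function φ̃(z) = (2/z²) log(z+√(z²−4)) − log(z+√(z²−4)) + (1 − 2/z²) log 2 + √(z²−4)/(2z), defined on ℂ \ (−∞, 2], satisfies φ̃(2) = 0 and φ̃(z) = −(2/3)(z−2)^{3/2} + O((z−2)²) as z → 2. -/

import Mathlib

/-!
Put `v = (z + √(z²−4))/2`, so that `z = v + 1/v` and `log (z + √(z²−4)) = log 2 + log v`.
Then `φ̃` becomes an explicit function of `v` whose Taylor expansion at `v = 1` starts with
`−(2/3)(v−1)³ + O((v−1)⁴)`. With the principal branches,
`v − 1 = √(z−2) · (√(z−2) + √(z+2))/2 = √(z−2) (1 + O(√(z−2)))`, so `v − 1 = O(√(z−2))` and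
`(v−1)³ = (z−2)^{3/2} + O((z−2)²)`. These estimates hold in a full neighbourhood of `2`.
-/

open Real Filter Topology Complex Asymptotics

/-- The branch of `√(z²−4)` on `ℂ \ (−∞,2]`, written as `(z−2)^{1/2}(z+2)^{1/2}`
with principal branches. -/
noncomputable def sqrtZsqSub4 (z : ℂ) : ℂ :=
  (z - 2) ^ ((1 : ℂ) / 2) * (z + 2) ^ ((1 : ℂ) / 2)

/-- `φ̃(z) = (2/z²) log(z+√(z²−4)) − log(z+√(z²−4)) + (1 − 2/z²) log 2 + √(z²−4)/(2z)`,
with principal branches, defined on `ℂ \ (−∞, 2]`. -/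
noncomputable def phiTilde (z : ℂ) : ℂ :=
  2 / z ^ 2 * Complex.log (z + sqrtZsqSub4 z) - Complex.log (z + sqrtZsqSub4 z)
    + (1 - 2 / z ^ 2) * (Real.log 2 : ℂ) + sqrtZsqSub4 z / (2 * z)

/-- The slit `(−∞, 2]` on the real axis. -/
def slit : Set ℂ := {z : ℂ | z.im = 0 ∧ z.re ≤ 2}

lemma cpow_half_sq (x : ℂ) : (x ^ ((1 : ℂ) / 2)) ^ 2 = x := by
  rw [one_div]
  exact cpow_ofNat_inv_pow x 2

lemma cpow_half_pow_four (x : ℂ) : (x ^ ((1 : ℂ) / 2)) ^ 4 = x ^ 2 := by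
  rw [show 4 = 2 * 2 by rfl, pow_mul, cpow_half_sq]

lemma four_cpow_half : (4 : ℂ) ^ ((1 : ℂ) / 2) = 2 := by
  rw [show (4 : ℂ) = 2 ^ 2 by norm_num, one_div]
  exact pow_cpow_nat_inv (n := 2) two_ne_zero (by simpa using pi_div_two_pos)
    (by simpa using pi_div_two_pos.le)

lemma tendsto_cpow_half_sub_self (a : ℂ) :
    Tendsto (fun z : ℂ => (z - a) ^ ((1 : ℂ) / 2)) (𝓝 a) (𝓝 0) := by
  have hsub : Tendsto (fun z : ℂ => z - a) (𝓝 a) (𝓝 0) := by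
    simpa using (tendsto_id (x := 𝓝 a)).sub_const a
  simpa [Function.comp_def, Complex.zero_cpow] using
    (continuousAt_cpow_zero_of_re_pos (z := (1 : ℂ) / 2) (by norm_num)).tendsto.comp
      (hsub.prodMk_nhds tendsto_const_nhds)

lemma isBigO_sub_cpow_half (a : ℂ) :
    (fun z : ℂ => z - a) =O[𝓝 a] (fun z : ℂ => (z - a) ^ ((1 : ℂ) / 2)) := by
  have h := (isBigO_refl (fun z : ℂ => (z - a) ^ ((1 : ℂ) / 2)) _).mul
    ((tendsto_cpow_half_sub_self a).isBigO_one ℂ)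
  simp only [mul_one] at h
  refine h.congr_left fun z => ?_
  rw [← sq, cpow_half_sq]

noncomputable def invJoukowski (z : ℂ) : ℂ := (z + sqrtZsqSub4 z) / 2

lemma mul_invJoukowski (z : ℂ) : z * invJoukowski z = invJoukowski z ^ 2 + 1 := by
  have h : sqrtZsqSub4 z ^ 2 = z ^ 2 - 4 := by
    rw [sqrtZsqSub4, mul_pow, cpow_half_sq, cpow_half_sq]; ring
  unfold invJoukowski
  linear_combination -h / 4

lemma invJoukowski_ne_zero (z : ℂ) : invJoukowski z ≠ 0 := by
  intro h
  simpa [h] using mul_invJoukowski z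

noncomputable def joukowskiPhi (v : ℂ) : ℂ :=
  (2 * v ^ 2 / (v ^ 2 + 1) ^ 2 - 1) * Complex.log v + (v ^ 2 - 1) / (2 * (v ^ 2 + 1))

lemma phiTilde_eq_joukowskiPhi {z : ℂ} (hz : z ≠ 0) :
    phiTilde z = joukowskiPhi (invJoukowski z) := by
  set v := invJoukowski z
  have hv : v ≠ 0 := invJoukowski_ne_zero z
  have hzv : z = (v ^ 2 + 1) / v := by rw [eq_div_iff hv, mul_invJoukowski]
  have hlog : Complex.log (z + sqrtZsqSub4 z) = Real.log 2 + Complex.log v := by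
    rw [show z + sqrtZsqSub4 z = ((2 : ℝ) : ℂ) * v by
      simp only [ofReal_ofNat, v, invJoukowski]; ring]
    exact Complex.log_ofReal_mul (by norm_num) hv
  have hs : sqrtZsqSub4 z = 2 * v - z := by simp only [v, invJoukowski]; ring
  have hv1 : v ^ 2 + 1 ≠ 0 := by rw [← mul_invJoukowski]; exact mul_ne_zero hz hv
  rw [phiTilde, joukowskiPhi, hlog, hs, hzv]
  field_simp
  ring

lemma joukowskiPhi_one_add_eq {q : ℂ} (hq : (1 + q) ^ 2 + 1 ≠ 0) :
    joukowskiPhi (1 + q) + 2 / 3 * q ^ 3 =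
      (2 * (1 + q) ^ 2 / ((1 + q) ^ 2 + 1) ^ 2 - 1) * (Complex.log (1 + q) - logTaylor 4 q)
        + q ^ 4 * ((2 * (1 + q) ^ 3 + 5 * (1 + q) ^ 2 + 10 * (1 + q) + 4)
          / (6 * ((1 + q) ^ 2 + 1) ^ 2)) := by
  simp only [joukowskiPhi, logTaylor, Finset.sum_range_succ, Finset.sum_range_zero]
  field_simp
  push_cast
  ring

lemma isBigO_joukowskiPhi_one_add :
    (fun q : ℂ => joukowskiPhi (1 + q) + 2 / 3 * q ^ 3) =O[𝓝 0] (fun q : ℂ => q ^ 4) := by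
  have hne : ∀ᶠ q in 𝓝 (0 : ℂ), (1 + q) ^ 2 + 1 ≠ 0 :=
    (show ContinuousAt (fun q : ℂ => (1 + q) ^ 2 + 1) 0 by fun_prop).eventually_ne (by norm_num)
  have hcoeff : (fun q : ℂ => 2 * (1 + q) ^ 2 / ((1 + q) ^ 2 + 1) ^ 2 - 1) =O[𝓝 0]
      (fun _ => (1 : ℂ)) :=
    (ContinuousAt.tendsto (by fun_prop (disch := norm_num))).isBigO_one ℂ
  have hrat : (fun q : ℂ => (2 * (1 + q) ^ 3 + 5 * (1 + q) ^ 2 + 10 * (1 + q) + 4)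
      / (6 * ((1 + q) ^ 2 + 1) ^ 2)) =O[𝓝 0] (fun _ => (1 : ℂ)) :=
    (ContinuousAt.tendsto (by fun_prop (disch := norm_num))).isBigO_one ℂ
  have hlog := hcoeff.mul (log_sub_logTaylor_isBigO 3)
  have hpoly := (isBigO_refl (fun q : ℂ => q ^ 4) _).mul hrat
  simp only [one_mul, mul_one] at hlog hpoly
  exact (hlog.add hpoly).congr' (hne.mono fun q hq => (joukowskiPhi_one_add_eq hq).symm)
    EventuallyEq.rfl

noncomputable def halfSumSqrt (z : ℂ) : ℂ :=
  ((z - 2) ^ ((1 : ℂ) / 2) + (z + 2) ^ ((1 : ℂ) / 2)) / 2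

lemma invJoukowski_eq_one_add (z : ℂ) :
    invJoukowski z = 1 + (z - 2) ^ ((1 : ℂ) / 2) * halfSumSqrt z := by
  have h := cpow_half_sq (z - 2)
  simp only [invJoukowski, sqrtZsqSub4, halfSumSqrt]
  linear_combination -h / 2

lemma isBigO_halfSumSqrt_sub_one :
    (fun z : ℂ => halfSumSqrt z - 1) =O[𝓝 2] (fun z : ℂ => (z - 2) ^ ((1 : ℂ) / 2)) := by
  have hdiff : DifferentiableAt ℂ (fun z : ℂ => (z + 2) ^ ((1 : ℂ) / 2)) 2 :=
    (differentiableAt_id.add_const 2).cpow_const (by norm_num)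
  have hp : (fun z : ℂ => (z + 2) ^ ((1 : ℂ) / 2) - 2) =O[𝓝 2] (fun z : ℂ => z - 2) := by
    have h := hdiff.isBigO_sub
    rwa [show (2 : ℂ) + 2 = 4 by norm_num, four_cpow_half] at h
  have h := ((isBigO_refl (fun z : ℂ => (z - 2) ^ ((1 : ℂ) / 2)) _).add
    (hp.trans (isBigO_sub_cpow_half 2))).const_mul_left (1 / 2 : ℂ)
  refine h.congr_left fun z => ?_
  rw [halfSumSqrt]
  ring

lemma tendsto_halfSumSqrt : Tendsto halfSumSqrt (𝓝 2) (𝓝 1) := by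
  simpa using
    (isBigO_halfSumSqrt_sub_one.trans_tendsto (tendsto_cpow_half_sub_self 2)).add_const 1

lemma isBigO_invJoukowski_sub_one :
    (fun z : ℂ => invJoukowski z - 1) =O[𝓝 2] (fun z : ℂ => (z - 2) ^ ((1 : ℂ) / 2)) := by
  have h := (isBigO_refl (fun z : ℂ => (z - 2) ^ ((1 : ℂ) / 2)) _).mul
    (tendsto_halfSumSqrt.isBigO_one ℂ)
  simp only [mul_one] at h
  exact h.congr_left fun z => by rw [invJoukowski_eq_one_add, add_sub_cancel_left]

lemma isBigO_invJoukowski_sub_one_pow_four :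
    (fun z : ℂ => (invJoukowski z - 1) ^ 4) =O[𝓝 2] (fun z : ℂ => (z - 2) ^ 2) :=
  (isBigO_invJoukowski_sub_one.pow 4).congr_right fun z => cpow_half_pow_four (z - 2)

lemma isBigO_cpow_three_halves_sub_invJoukowski_sub_one_pow_three :
    (fun z : ℂ => (z - 2) ^ ((3 : ℂ) / 2) - (invJoukowski z - 1) ^ 3)
      =O[𝓝 2] (fun z : ℂ => (z - 2) ^ 2) := by
  have hcube : (fun z : ℂ => 1 - halfSumSqrt z ^ 3)
      =O[𝓝 2] (fun z : ℂ => (z - 2) ^ ((1 : ℂ) / 2)) := by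
    have h := (isBigO_halfSumSqrt_sub_one.mul
      ((((tendsto_halfSumSqrt.pow 2).add tendsto_halfSumSqrt).add_const 1).isBigO_one ℂ)).neg_left
    simp only [mul_one] at h
    exact h.congr_left fun z => by ring
  have h := (isBigO_refl (fun z : ℂ => ((z - 2) ^ ((1 : ℂ) / 2)) ^ 3) _).mul hcube
  refine (h.congr_right fun z => ?_).congr_left fun z => ?_
  · rw [← pow_succ, cpow_half_pow_four]
  · rw [invJoukowski_eq_one_add, add_sub_cancel_left,
      show (3 : ℂ) / 2 = (3 : ℕ) * (1 / 2) by norm_num, cpow_nat_mul]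
    ring

lemma phiTilde_two : phiTilde 2 = 0 := by
  have hs : sqrtZsqSub4 2 = 0 := by simp [sqrtZsqSub4]
  rw [phiTilde, hs, add_zero, ← Complex.ofReal_ofNat, ← Complex.ofReal_log zero_le_two]
  ring

/-- `φ̃(2) = 0` and `φ̃(z) = −(2/3)(z−2)^{3/2} + O((z−2)²)` as `z → 2` in `ℂ \ (−∞, 2]`. -/
theorem phiTilde_at_two :
    phiTilde 2 = 0 ∧
    (fun z : ℂ => phiTilde z + 2 / 3 * (z - 2) ^ ((3 : ℂ) / 2))
      =O[𝓝[slitᶜ] 2] (fun z : ℂ => (z - 2) ^ 2) := by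
  refine ⟨phiTilde_two, IsBigO.mono ?_ nhdsWithin_le_nhds⟩
  have hq := isBigO_invJoukowski_sub_one.trans_tendsto (tendsto_cpow_half_sub_self 2)
  have hphi := (isBigO_joukowskiPhi_one_add.comp_tendsto hq).trans
    isBigO_invJoukowski_sub_one_pow_four
  have hne : ∀ᶠ z in 𝓝 (2 : ℂ), z ≠ 0 := eventually_ne_nhds two_ne_zero
  refine (hphi.add
    (isBigO_cpow_three_halves_sub_invJoukowski_sub_one_pow_three.const_mul_left (2 / 3))).congr'
    (hne.mono fun z hz => ?_) EventuallyEq.rfl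
  simp only [Function.comp_def, phiTilde_eq_joukowskiPhi hz, add_sub_cancel]
  ring
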